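/- arXiv:2206.01667 — 7 statements merged into one kernel-verified Lean document; each statement's English description precedes it below -/
import Mathlib

section
/- Every functionally Hausdorff topological space X whose square X × X is hereditarily Lindelöf is submetrizable, i.e., admits a continuous injective map into a metrizable space. -/
/-- Every functionally Hausdorff space whose square is hereditarily Lindelöf is
submetrizable: it admits a continuous injection into a metrizable space. -/
theorem submetrizable_of_functionallyHausdorff_hereditarilyLindelof_sq
    {X : Type u} [TopologicalSpace X]
    (hfH : ∀ x y : X, x ≠ y → ∃ f : X → ℝ, Continuous f ∧ f x ≠ f y)
    (hL : HereditarilyLindelofSpace (X × X)) :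
    ∃ (Y : Type u) (_ : TopologicalSpace Y), TopologicalSpace.MetrizableSpace Y ∧
      ∃ f : X → Y, Continuous f ∧ Function.Injective f := by
  by_cases hsub : ∀ x y : X, x = y
  · refine ⟨ULift ℝ, inferInstance, inferInstance, fun _ => ⟨0⟩, continuous_const, ?_⟩
    intro a b _
    exact hsub a b
  · push_neg at hsub
    obtain ⟨x₀, y₀, hxy₀⟩ := hsub
    set ι := {p : X × X // p.1 ≠ p.2}
    have : Nonempty ι := ⟨⟨(x₀, y₀), hxy₀⟩⟩
    choose F hFc hF using fun p : ι => hfH p.1.1 p.1.2 p.2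
    set U : ι → Set (X × X) := fun p => {q | F p q.1 ≠ F p q.2}
    have hUo : ∀ p, IsOpen (U p) := fun p =>
      isOpen_ne_fun ((hFc p).comp continuous_fst) ((hFc p).comp continuous_snd)
    have hD : IsLindelof {q : X × X | q.1 ≠ q.2} :=
      (HereditarilyLindelofSpace.isHereditarilyLindelof_univ (X := X × X)).isLindelof_subset
        (Set.subset_univ _)
    have hcov : {q : X × X | q.1 ≠ q.2} ⊆ ⋃ p, U p := by
      intro q hq
      exact Set.mem_iUnion.2 ⟨⟨q, hq⟩, hF ⟨q, hq⟩⟩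
    obtain ⟨g, hg⟩ := hD.indexed_countable_subcover U hUo hcov
    refine ⟨ULift.{u} (ℕ → ℝ), inferInstance,
      Homeomorph.ulift.isEmbedding.metrizableSpace, fun x => ⟨fun n => F (g n) x⟩,
      ?_, ?_⟩
    · exact (continuous_uliftUp.comp (continuous_pi fun n => hFc (g n)))
    · intro a b hab
      by_contra hne
      obtain ⟨s, ⟨n, rfl⟩, hs⟩ := hg (show ((a, b) : X × X) ∈ _ from hne)
      exact hs (congrFun (congrArg ULift.down hab) n)
end

section
/- If X is a functionally Hausdorff space whose square is hereditarily Lindelöf, then there exists a countable family (f_n) of continuous real-valued functions on X that separates points of X. -/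
/-- If `X` is functionally Hausdorff and `X × X` is hereditarily Lindelöf, then there is a
countable family of continuous real-valued functions separating the points of `X`. -/
theorem exists_countable_separating_family_of_functionallyHausdorff
    {X : Type*} [TopologicalSpace X]
    (hfH : ∀ x y : X, x ≠ y → ∃ f : X → ℝ, Continuous f ∧ f x ≠ f y)
    (hL : HereditarilyLindelofSpace (X × X)) :
    ∃ f : ℕ → X → ℝ, (∀ n, Continuous (f n)) ∧
      ∀ x y : X, x ≠ y → ∃ n, f n x ≠ f n y := by
  classical
  set ι := {f : X → ℝ // Continuous f}
  set U : ι → Set (X × X) := fun f => {p | f.1 p.1 ≠ f.1 p.2}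
  have hUo : ∀ f : ι, IsOpen (U f) := by
    intro f
    exact isOpen_ne_fun (f.2.comp continuous_fst) (f.2.comp continuous_snd)
  have hsL : IsLindelof ((Set.diagonal X)ᶜ) :=
    HereditarilyLindelof_LindelofSets _
  have hcov : (Set.diagonal X)ᶜ ⊆ ⋃ f : ι, U f := by
    rintro ⟨x, y⟩ hxy
    obtain ⟨f, hf, hne⟩ := hfH x y hxy
    exact Set.mem_iUnion.2 ⟨⟨f, hf⟩, hne⟩
  obtain ⟨r, hr, hrcov⟩ := hsL.elim_countable_subcover U hUo hcov
  have hne : (insert (⟨fun _ => 0, continuous_const⟩ : ι) r).Nonempty :=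
    Set.insert_nonempty _ _
  obtain ⟨e, he⟩ := (Set.Countable.exists_eq_range (hr.insert _) hne)
  refine ⟨fun n => (e n).1, fun n => (e n).2, ?_⟩
  intro x y hxy
  have : (x, y) ∈ ⋃ f ∈ r, U f := hrcov (by simpa [Set.diagonal] using hxy)
  obtain ⟨g, hg, hgU⟩ := Set.mem_iUnion₂.1 this
  have : g ∈ Set.range e := by rw [← he]; exact Set.mem_insert_of_mem _ hg
  obtain ⟨n, rfl⟩ := this
  exact ⟨n, hgU⟩
end

section
/- Every second-countable T₁-space X with a subset A that is not G_δ admits a finer second-countable topology τ' (generated by adding X∖A as an open set) which is functionally Hausdorff whenever the original topology is metrizable, and in which A is closed but not G_δ; hence (X, τ') is not perfect. -/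
open TopologicalSpace

/-- Structural lemma: every open set of the refined topology agrees on `A` with a
`t`-open subset of it. -/
theorem aux_open_structure {X : Type*} [t : TopologicalSpace X] (A : Set X) (U : Set X)
    (hU : @IsOpen X (generateFrom ({S : Set X | IsOpen S} ∪ {Aᶜ})) U) :
    ∃ V : Set X, IsOpen V ∧ V ⊆ U ∧ U ∩ A = V ∩ A := by
  induction hU with
  | basic S hS =>
    rcases hS with hS | hS
    · exact ⟨S, hS, subset_rfl, rfl⟩
    · refine ⟨∅, isOpen_empty, (Set.empty_subset _), ?_⟩
      simp at hS
      subst hS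
      simp [Set.compl_inter_self]
  | univ => exact ⟨Set.univ, isOpen_univ, subset_rfl, rfl⟩
  | inter S T _ _ ihS ihT =>
    obtain ⟨V, hV, hVS, hVA⟩ := ihS
    obtain ⟨W, hW, hWT, hWA⟩ := ihT
    refine ⟨V ∩ W, hV.inter hW, Set.inter_subset_inter hVS hWT, ?_⟩
    rw [Set.inter_inter_distrib_right, hVA, hWA, ← Set.inter_inter_distrib_right]
  | sUnion 𝒮 _ ih =>
    choose V hV hVsub hVA using ih
    refine ⟨⋃ s : 𝒮, V s s.2, isOpen_iUnion fun s => hV s s.2, ?_, ?_⟩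
    · exact Set.iUnion_subset fun s => (hVsub s s.2).trans (Set.subset_sUnion_of_mem s.2)
    · rw [Set.sUnion_eq_iUnion, Set.iUnion_inter, Set.iUnion_inter]
      exact Set.iUnion_congr fun s => hVA s s.2

/-- If `A` is not Gδ for `t`, it is not Gδ for the refined topology either. -/
theorem aux_not_gdelta {X : Type*} [t : TopologicalSpace X] (A : Set X) (hA : ¬ IsGδ A) :
    ¬ @IsGδ X (generateFrom ({S : Set X | IsOpen S} ∪ {Aᶜ})) A := by
  intro h
  obtain ⟨T, hTopen, hTc, hTA⟩ := h
  haveI := hTc.to_subtype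
  apply hA
  choose V hVopen hVsub hVA using fun s : T => aux_open_structure A s (hTopen s s.2)
  have hAsub : ∀ s : T, A ⊆ V s := by
    intro s x hx
    have hxs : x ∈ (s : Set X) := by rw [hTA] at hx; exact hx s s.2
    have hmem : x ∈ (s : Set X) ∩ A := ⟨hxs, hx⟩
    rw [hVA s] at hmem
    exact hmem.1
  have hEq : A = ⋂ s : T, V s := by
    apply Set.Subset.antisymm
    · exact Set.subset_iInter hAsub
    · intro x hx
      rw [hTA]
      intro s hs
      exact hVsub ⟨s, hs⟩ (Set.mem_iInter.mp hx ⟨s, hs⟩)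
  rw [hEq]
  exact IsGδ.iInter fun s => (hVopen s).isGδ

/-- If the complement of `A` is a countable union of closed sets, then `A` is Gδ. -/
theorem aux_gdelta_of_union {X : Type*} [t : TopologicalSpace X] (A : Set X) (C : ℕ → Set X)
    (hC : ∀ n, IsClosed (C n)) (hU : Aᶜ = ⋃ n, C n) : IsGδ A := by
  have hEq : A = ⋂ n, (C n)ᶜ := by rw [← Set.compl_iUnion, ← hU, compl_compl]
  rw [hEq]
  exact IsGδ.iInter fun n => (hC n).isOpen_compl.isGδ

/-- The refined topology is second countable. -/
theorem aux_second_countable {X : Type*} [t : TopologicalSpace X] [SecondCountableTopology X]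
    (A : Set X) :
    @SecondCountableTopology X (generateFrom ({S : Set X | IsOpen S} ∪ {Aᶜ})) := by
  refine @SecondCountableTopology.mk X (generateFrom ({S : Set X | IsOpen S} ∪ {Aᶜ}))
    ⟨countableBasis X ∪ {Aᶜ},
      (countable_countableBasis X).union (Set.countable_singleton _), ?_⟩
  rw [generateFrom_union, generateFrom_union, generateFrom_setOf_isOpen,
    ← eq_generateFrom_countableBasis X]

/-- Point separation by continuous real functions in a metrizable space. -/
theorem aux_separate {X : Type*} [t : TopologicalSpace X] [TopologicalSpace.MetrizableSpace X]
    (x y : X) (hxy : x ≠ y) : ∃ f : X → ℝ, Continuous f ∧ f x ≠ f y := by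
  letI : MetricSpace X := TopologicalSpace.metrizableSpaceMetric X
  refine ⟨fun z => dist z x, continuous_id.dist continuous_const, ?_⟩
  simp only [dist_self]
  exact fun h => hxy (dist_eq_zero.mp h.symm).symm

/-- A second-countable T₁-space `X` with a metrizable topology and a subset `A` that is
not Gδ admits a finer second-countable topology `τ'` (generated by adding `X \ A` as an
open set) which is functionally Hausdorff, and in which `A` is closed but not Gδ; hence
`(X, τ')` is not perfect. -/
theorem refined_topology_not_perfect {X : Type*} [t : TopologicalSpace X]
    [T1Space X] [SecondCountableTopology X] [TopologicalSpace.MetrizableSpace X]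
    (A : Set X) (hA : ¬ IsGδ A) :
    @SecondCountableTopology X (generateFrom ({S : Set X | IsOpen S} ∪ {Aᶜ})) ∧
    generateFrom ({S : Set X | IsOpen S} ∪ {Aᶜ}) ≤ t ∧
    (∀ x y : X, x ≠ y → ∃ f : X → ℝ,
      @Continuous X ℝ (generateFrom ({S : Set X | IsOpen S} ∪ {Aᶜ})) _ f ∧ f x ≠ f y) ∧
    @IsClosed X (generateFrom ({S : Set X | IsOpen S} ∪ {Aᶜ})) A ∧
    ¬ @IsGδ X (generateFrom ({S : Set X | IsOpen S} ∪ {Aᶜ})) A ∧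
    ¬ (∀ U : Set X, @IsOpen X (generateFrom ({S : Set X | IsOpen S} ∪ {Aᶜ})) U →
        ∃ C : ℕ → Set X,
          (∀ n, @IsClosed X (generateFrom ({S : Set X | IsOpen S} ∪ {Aᶜ})) (C n)) ∧
          U = ⋃ n, C n) := by
  have hle : generateFrom ({S : Set X | IsOpen S} ∪ {Aᶜ}) ≤ t := by
    conv_rhs => rw [← generateFrom_setOf_isOpen t]
    exact generateFrom_anti Set.subset_union_left
  have hAc : @IsOpen X (generateFrom ({S : Set X | IsOpen S} ∪ {Aᶜ})) Aᶜ :=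
    isOpen_generateFrom_of_mem (Set.mem_union_right _ rfl)
  have hnotGδ := aux_not_gdelta A hA
  refine ⟨aux_second_countable A, hle, ?_, @IsClosed.mk X (generateFrom ({S : Set X | IsOpen S} ∪ {Aᶜ})) A hAc, hnotGδ, ?_⟩
  · intro x y hxy
    obtain ⟨f, hf, hfxy⟩ := aux_separate x y hxy
    exact ⟨f, continuous_le_dom hle hf, hfxy⟩
  · intro h
    obtain ⟨C, hCclosed, hCU⟩ := h Aᶜ hAc
    exact hnotGδ (@aux_gdelta_of_union X (generateFrom ({S : Set X | IsOpen S} ∪ {Aᶜ})) A C hCclosed hCU)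
end

section
/- Let X be a second-countable T₁-space with base {U_n}. Suppose for each x ∈ A there is an infinite decreasing 'neighborhood base index set' I_x ⊆ ω (i.e., for m < n in I_x, x ∈ U_n ⊆ U_m, and {U_n : n ∈ I_x} is a neighborhood base at x), and for y ∉ A let I_y = {n : y ∈ U_n}. Then for any x ∈ A and y ≠ x, the intersection I_x ∩ I_y is finite. -/
open TopologicalSpace

/-- Let `X` be a second-countable T₁-space with base `{U n}`. If for each `x ∈ A` the set
`I x ⊆ ω` is infinite, the `U n` for `n ∈ I x` are decreasing and form a neighborhood base
at `x`, then for any `x ∈ A` and `y ≠ x` the intersection of `I x` with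
`{n : y ∈ U n}` is finite. -/
theorem index_sets_orthogonal {X : Type*} [TopologicalSpace X] [T1Space X]
    (U : ℕ → Set X) (hU : IsTopologicalBasis (Set.range U))
    (A : Set X) (I : X → Set ℕ)
    (hinf : ∀ x ∈ A, (I x).Infinite)
    (hdec : ∀ x ∈ A, ∀ m ∈ I x, ∀ n ∈ I x, m < n → x ∈ U n ∧ U n ⊆ U m)
    (hbase : ∀ x ∈ A, ∀ O : Set X, IsOpen O → x ∈ O → ∃ n ∈ I x, x ∈ U n ∧ U n ⊆ O) :
    ∀ x ∈ A, ∀ y : X, y ≠ x → (I x ∩ {n | y ∈ U n}).Finite := by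
  intro x hx y hy
  obtain ⟨n₀, hn₀I, hxn₀, hsub⟩ := hbase x hx {y}ᶜ isClosed_singleton.isOpen_compl
    (by simpa using hy.symm)
  apply Set.Finite.subset (Set.finite_Iic n₀)
  rintro n ⟨hnI, hyn⟩
  by_contra h
  have hlt : n₀ < n := lt_of_not_ge (fun hle => h (Set.mem_Iic.mpr hle))
  exact hsub ((hdec x hx n₀ hn₀I n hnI hlt).2 hyn) rfl
end

section
/- Every second-countable T₁-space of cardinality strictly less than 𝔞𝔡𝔭 is a Q-space. -/
open Set

/-- `𝒜` is weakly separated from `ℬ` if some `D ⊆ ω` meets every member of `𝒜` in an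
infinite set and every member of `ℬ` in a finite set. -/
def WeaklySeparated (𝒜 ℬ : Set (Set ℕ)) : Prop :=
  ∃ D : Set ℕ, (∀ A ∈ 𝒜, (A ∩ D).Infinite) ∧ (∀ B ∈ ℬ, (B ∩ D).Finite)

/-- The cardinal `𝔞𝔡𝔭`: the least cardinality of `𝒜 ∪ ℬ` where `𝒜, ℬ ⊆ [ω]^ω` are
orthogonal, `𝒜` is almost disjoint, and `𝒜` cannot be weakly separated from `ℬ`. -/
noncomputable def adp : Cardinal :=
  sInf {c : Cardinal | ∃ 𝒜 ℬ : Set (Set ℕ),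
    (∀ A ∈ 𝒜, A.Infinite) ∧ (∀ B ∈ ℬ, B.Infinite) ∧
    (∀ A ∈ 𝒜, ∀ B ∈ ℬ, (A ∩ B).Finite) ∧
    (𝒜.Pairwise fun A B => (A ∩ B).Finite) ∧
    ¬ WeaklySeparated 𝒜 ℬ ∧
    c = Cardinal.mk ↥(𝒜 ∪ ℬ)}

/-- A set is Fσ if it is a countable union of closed sets. -/
def IsFsigma {X : Type*} [TopologicalSpace X] (A : Set X) : Prop :=
  ∃ C : ℕ → Set X, (∀ n, IsClosed (C n)) ∧ A = ⋃ n, C n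

/-- Every second-countable T₁-space of cardinality `< 𝔞𝔡𝔭` is a Q-space. -/
theorem qspace_of_card_lt_adp {X : Type} [TopologicalSpace X]
    [SecondCountableTopology X] [T1Space X]
    (hcard : Cardinal.mk X < adp) :
    ∀ A : Set X, IsFsigma A := by
  classical
  intro A
  -- a countable family of open sets separating points (T₁-style)
  obtain ⟨b, hbc, -, hbb⟩ := TopologicalSpace.exists_countable_basis X
  obtain ⟨U, hU⟩ := (hbc.insert ∅).exists_eq_range (insert_nonempty _ _)
  have hUopen : ∀ n, IsOpen (U n) := by
    intro n
    have h : U n ∈ insert (∅ : Set X) b := hU ▸ mem_range_self n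
    rcases h with h | h
    · rw [h]; exact isOpen_empty
    · exact hbb.isOpen h
  have hsep : ∀ x y : X, x ≠ y → ∃ n, x ∈ U n ∧ y ∉ U n := by
    intro x y hxy
    obtain ⟨v, hvb, hxv, hvsub⟩ := hbb.exists_subset_of_mem_open
      (show x ∈ ({y}ᶜ : Set X) from hxy) isOpen_compl_singleton
    have hv : v ∈ range U := hU ▸ mem_insert_of_mem _ hvb
    obtain ⟨n, rfl⟩ := hv
    exact ⟨n, hxv, fun hy => hvsub hy rfl⟩
  -- basic combinatorial objects
  let sk : X → ℕ → Finset ℕ := fun x k => (Finset.range (k+1)).filter (fun j => x ∈ U j)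
  let W : ℕ × Finset ℕ → Set X := fun p => ⋂ j ∈ p.2, U j
  have hWopen : ∀ p, IsOpen (W p) := fun p => isOpen_biInter_finset (fun j _ => hUopen j)
  let φ : X → ℕ → ℕ × Finset ℕ := fun x k => (k, sk x k)
  let S : X → Set (ℕ × Finset ℕ) := fun x => range (φ x)
  let M : X → Set (ℕ × Finset ℕ) := fun x => {p | x ∈ W p}
  have hφinj : ∀ x, Function.Injective (φ x) := fun x k l h => congrArg Prod.fst h
  have hmemW : ∀ x k, x ∈ W (φ x k) := by
    intro x k
    refine mem_iInter₂.2 fun j hj => ?_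
    exact (Finset.mem_filter.1 hj).2
  have hSM : ∀ x, S x ⊆ M x := by
    rintro x p ⟨k, rfl⟩; exact hmemW x k
  have hSinf : ∀ x, (S x).Infinite := fun x => infinite_range_of_injective (hφinj x)
  have hkey : ∀ x y : X, x ≠ y → (S x ∩ M y).Finite := by
    intro x y hxy
    obtain ⟨n, hxn, hyn⟩ := hsep x y hxy
    have hsub : S x ∩ M y ⊆ φ x '' {k | k < n} := by
      rintro p ⟨⟨k, rfl⟩, hpM⟩
      rcases lt_or_ge k n with h | h
      · exact ⟨k, h, rfl⟩
      · exfalso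
        have hn : n ∈ sk x k := Finset.mem_filter.2 ⟨Finset.mem_range.2 (by omega), hxn⟩
        exact hyn (mem_iInter₂.1 hpM n hn)
    exact ((finite_Iio n).image _).subset hsub
  -- encode into ℕ
  let e : ℕ × Finset ℕ → ℕ := Encodable.encode
  have he : Function.Injective e := Encodable.encode_injective
  let g : X → Set ℕ := fun x => if x ∈ A then e '' M x else e '' S x
  have hgA : ∀ b ∈ Aᶜ, g b = e '' S b := fun b hb => if_neg hb
  have hgB : ∀ a ∈ A, g a = e '' M a := fun a ha => if_pos ha
  let 𝒜 : Set (Set ℕ) := g '' Aᶜ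
  let ℬ : Set (Set ℕ) := g '' A
  -- the families are weakly separated, by cardinality
  have hws : WeaklySeparated 𝒜 ℬ := by
    by_contra hns
    have hmem : Cardinal.mk ↥(𝒜 ∪ ℬ) ∈ {c : Cardinal | ∃ 𝒜 ℬ : Set (Set ℕ),
        (∀ A ∈ 𝒜, A.Infinite) ∧ (∀ B ∈ ℬ, B.Infinite) ∧
        (∀ A ∈ 𝒜, ∀ B ∈ ℬ, (A ∩ B).Finite) ∧
        (𝒜.Pairwise fun A B => (A ∩ B).Finite) ∧
        ¬ WeaklySeparated 𝒜 ℬ ∧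
        c = Cardinal.mk ↥(𝒜 ∪ ℬ)} := by
      refine ⟨𝒜, ℬ, ?_, ?_, ?_, ?_, hns, rfl⟩
      · rintro _ ⟨x, hx, rfl⟩
        rw [hgA x hx]
        exact (hSinf x).image he.injOn
      · rintro _ ⟨x, hx, rfl⟩
        rw [hgB x hx]
        exact (((hSinf x).mono (hSM x)).image he.injOn)
      · rintro _ ⟨x, hx, rfl⟩ _ ⟨y, hy, rfl⟩
        rw [hgA x hx, hgB y hy, ← image_inter he]
        exact ((hkey x y (fun h => hx (h ▸ hy))).image e)
      · rintro _ ⟨x, hx, rfl⟩ _ ⟨y, hy, rfl⟩ hne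
        have hxy : x ≠ y := by rintro rfl; exact hne rfl
        rw [hgA x hx, hgA y hy, ← image_inter he]
        exact (((hkey x y hxy).subset (inter_subset_inter_right _ (hSM y))).image e)
    have h1 : adp ≤ Cardinal.mk ↥(𝒜 ∪ ℬ) := csInf_le' hmem
    have h2 : Cardinal.mk ↥(𝒜 ∪ ℬ) ≤ Cardinal.mk X := by
      have hu : 𝒜 ∪ ℬ = range g := by
        rw [show 𝒜 ∪ ℬ = g '' (Aᶜ ∪ A) from (image_union g Aᶜ A).symm,
          compl_union_self, image_univ]
      rw [hu]
      exact Cardinal.mk_range_le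
    exact absurd (h1.trans h2) (not_le.2 hcard)
  obtain ⟨D, hD1, hD2⟩ := hws
  let D' : Set (ℕ × Finset ℕ) := e ⁻¹' D
  have hbD : ∀ x ∉ A, (S x ∩ D').Infinite := by
    intro x hx
    have h1 : (g x ∩ D).Infinite := hD1 (g x) ⟨x, hx, rfl⟩
    rw [hgA x hx] at h1
    intro hfin
    apply h1
    have hsub : e '' S x ∩ D ⊆ e '' (S x ∩ D') := by
      rintro q ⟨⟨p, hp, rfl⟩, hq⟩
      exact ⟨p, ⟨hp, hq⟩, rfl⟩
    exact (hfin.image e).subset hsub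
  have haD : ∀ x ∈ A, (M x ∩ D').Finite := by
    intro x hx
    have h1 : (g x ∩ D).Finite := hD2 (g x) ⟨x, hx, rfl⟩
    rw [hgB x hx] at h1
    have hsub : e '' (M x ∩ D') ⊆ e '' M x ∩ D := by
      rintro _ ⟨p, ⟨hpM, hpD⟩, rfl⟩
      exact ⟨⟨p, hpM, rfl⟩, hpD⟩
    exact Set.Finite.of_finite_image (h1.subset hsub) he.injOn
  -- the Fσ decomposition
  refine ⟨fun m => (⋃ p ∈ {p : ℕ × Finset ℕ | p ∈ D' ∧ m ≤ p.1}, W p)ᶜ, ?_, ?_⟩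
  · intro m
    exact (isOpen_biUnion fun p _ => hWopen p).isClosed_compl
  · ext x
    simp only [mem_iUnion, mem_compl_iff]
    constructor
    · intro hx
      have hfin := (haD x hx).image Prod.fst
      obtain ⟨m, hm⟩ := hfin.bddAbove
      refine ⟨m + 1, ?_⟩
      intro hmem
      obtain ⟨p, ⟨hpD, hpm⟩, hxp⟩ := hmem
      have : p.1 ≤ m := hm ⟨p, ⟨hxp, hpD⟩, rfl⟩
      omega
    · rintro ⟨m, hm⟩
      by_contra hxA
      have hinf := hbD x hxA
      have hidx : {k | φ x k ∈ D'}.Infinite := by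
        intro hfin
        apply hinf
        refine (hfin.image (φ x)).subset ?_
        rintro p ⟨⟨k, rfl⟩, hpD⟩
        exact ⟨k, hpD, rfl⟩
      obtain ⟨k, hk1, hk2⟩ := hidx.exists_gt m
      exact hm ⟨φ x k, ⟨hk1, le_of_lt hk2⟩, hmemW x k⟩
end

section
/- Every space of cardinality less than 𝔮₁ that has a countable separating family of open sets is a Q-space, where 𝔮₁ is the smallest cardinality of a second-countable T₁-space that is not a Q-space. -/
/-- `𝔮₁`: the smallest cardinality of a second-countable T₁-space that is not a Q-space. -/
noncomputable def q1 : Cardinal :=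
  sInf {c : Cardinal | ∃ (X : Type) (_ : TopologicalSpace X),
    SecondCountableTopology X ∧ T1Space X ∧ ¬ (∀ A : Set X, IsFsigma A) ∧
    c = Cardinal.mk X}

/-- Every space of cardinality `< 𝔮₁` with a countable separating family of open sets is
a Q-space. -/
theorem qspace_of_sw_countable_card_lt_q1 {X : Type} [TopologicalSpace X]
    (𝓕 : Set (Set X)) (hcount : 𝓕.Countable) (hopen : ∀ F ∈ 𝓕, IsOpen F)
    (hsep : ∀ x y : X, x ≠ y → ∃ F ∈ 𝓕, x ∈ F ∧ y ∉ F)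
    (hcard : Cardinal.mk X < q1) :
    ∀ A : Set X, IsFsigma A := by
  intro A
  rename_i t
  let t' : TopologicalSpace X := TopologicalSpace.generateFrom 𝓕
  -- the original topology is finer than t'
  have hle : t ≤ t' := by
    apply TopologicalSpace.le_generateFrom_iff_subset_isOpen.mpr
    intro F hF
    exact hopen F hF
  have hsc : @SecondCountableTopology X t' := ⟨⟨𝓕, hcount, rfl⟩⟩
  have ht1 : @T1Space X t' := by
    rw [@t1Space_iff_exists_open X t']
    intro x y hxy
    obtain ⟨F, hF, hx, hy⟩ := hsep x y hxy
    exact ⟨F, TopologicalSpace.isOpen_generateFrom_of_mem hF, hx, hy⟩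
  have hq : ∀ B : Set X, @IsFsigma X t' B := by
    by_contra h
    have : q1 ≤ Cardinal.mk X :=
      csInf_le' ⟨X, t', hsc, ht1, h, rfl⟩
    exact absurd hcard (not_lt.2 this)
  obtain ⟨C, hC, hAC⟩ := hq A
  exact ⟨C, fun n => (hC n).mono hle, hAC⟩
end

section
/- Let {U_n} be a countable base of a second-countable T₁-space X and for each x in a subset A ⊆ X choose I_x ⊆ ω infinite with the property that {U_n : n ∈ I_x} is a decreasing (with respect to index order) neighborhood base at x. Then the family {I_x : x ∈ A} is almost disjoint: for distinct x, x' ∈ A, the set I_x ∩ I_{x'} is finite. -/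
open TopologicalSpace

/-- Let `{U n}` be a countable base of a second-countable T₁-space `X`, and for each
`x ∈ A` let `I x ⊆ ω` be infinite such that the `U n`, `n ∈ I x`, are decreasing and form
a neighborhood base at `x`. Then `{I x : x ∈ A}` is almost disjoint: for distinct
`x, x' ∈ A`, the set `I x ∩ I x'` is finite. -/
theorem index_sets_almost_disjoint {X : Type*} [TopologicalSpace X] [T1Space X]
    (U : ℕ → Set X) (hU : IsTopologicalBasis (Set.range U))
    (A : Set X) (I : X → Set ℕ)
    (hinf : ∀ x ∈ A, (I x).Infinite)
    (hdec : ∀ x ∈ A, ∀ m ∈ I x, ∀ n ∈ I x, m < n → x ∈ U n ∧ U n ⊆ U m)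
    (hbase : ∀ x ∈ A, ∀ O : Set X, IsOpen O → x ∈ O → ∃ n ∈ I x, x ∈ U n ∧ U n ⊆ O) :
    ∀ x ∈ A, ∀ x' ∈ A, x ≠ x' → (I x ∩ I x').Finite := by
  intro x hx x' hx' hne
  by_contra hinfinite
  replace hinfinite : (I x ∩ I x').Infinite := hinfinite
  -- open set around x avoiding x'
  obtain ⟨n₀, hn₀I, hxn₀, hn₀sub⟩ :=
    hbase x hx {x'}ᶜ (isOpen_compl_singleton) (by simpa using hne)
  -- open set around x' avoiding x
  obtain ⟨n₁, hn₁I, hx'n₁, hn₁sub⟩ :=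
    hbase x' hx' {x}ᶜ (isOpen_compl_singleton) (by simpa using hne.symm)
  obtain ⟨n, hn, hlt⟩ := hinfinite.exists_gt (max n₀ n₁)
  have hnx : n ∈ I x := hn.1
  have hnx' : n ∈ I x' := hn.2
  have h1 := hdec x hx n₀ hn₀I n hnx (lt_of_le_of_lt (le_max_left _ _) hlt)
  have h2 := hdec x' hx' n₁ hn₁I n hnx' (lt_of_le_of_lt (le_max_right _ _) hlt)
  exact hn₁sub (h2.2 h1.1) rfl
end
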